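/- arXiv:0801.0086 — 3 statements merged into one kernel-verified Lean document; each statement's English description precedes it below -/
import Mathlib

section
/- Any two distinct associated primes of R are connected by an edge in Γ_E(R); that is, if ann(x) and ann(y) are distinct prime ideals, then xy = 0. -/
open scoped Classical

noncomputable section

/-- The annihilator ideal of an element `x` of a commutative ring `R`. -/
def ann (R : Type*) [CommRing R] (x : R) : Ideal R := Ideal.torsionOf R R x

/-- The type of nonzero zero divisors of `R`. -/
def ZD (R : Type*) [CommRing R] : Type _ :=
  {x : R // x ≠ 0 ∧ ∃ y : R, y ≠ 0 ∧ x * y = 0}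

/-- Two zero divisors are equivalent iff they have the same annihilator. -/
instance annSetoid (R : Type*) [CommRing R] : Setoid (ZD R) :=
  ⟨fun a b => ann R a.1 = ann R b.1,
   fun _ => rfl, Eq.symm, Eq.trans⟩

/-- The vertex set of `Γ_E(R)`: equivalence classes of nonzero zero divisors. -/
def GammaEV (R : Type*) [CommRing R] : Type _ := Quotient (annSetoid R)

/-- The class of a nonzero zero divisor. -/
def cls (R : Type*) [CommRing R] (a : ZD R) : GammaEV R :=
  Quotient.mk (annSetoid R) a

/-- The graph `Γ_E(R)` of equivalence classes of zero divisors. -/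
def gammaE (R : Type*) [CommRing R] : SimpleGraph (GammaEV R) where
  Adj u v := u ≠ v ∧ ∃ a b : ZD R, cls R a = u ∧ cls R b = v ∧ a.1 * b.1 = 0
  symm := by
    constructor
    rintro u v ⟨huv, a, b, ha, hb, hab⟩
    exact ⟨huv.symm, b, a, hb, ha, by rwa [mul_comm] at hab⟩
  loopless := by constructor; rintro u ⟨h, -⟩; exact h rfl

/-- `I` is a maximal element of the family `F = {ann x : 0 ≠ x ∈ R}`. -/
def MaxAnn (R : Type*) [CommRing R] (I : Ideal R) : Prop :=
  (∃ x : R, x ≠ 0 ∧ I = ann R x) ∧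
    ∀ y : R, y ≠ 0 → I ≤ ann R y → I = ann R y

lemma mem_ann_iff {R : Type*} [CommRing R] {a x : R} : a ∈ ann R x ↔ a * x = 0 := by
  simp [ann, Ideal.mem_torsionOf_iff, smul_eq_mul]

lemma mul_eq_zero_of_not_le_ann {R : Type*} [CommRing R] {x y : R} (hy : (ann R y).IsPrime)
    (hxy : ¬ ann R x ≤ ann R y) : x * y = 0 := by
  obtain ⟨a, hax, hay⟩ := Set.not_subset.mp hxy
  have hxa : x * a ∈ ann R y := by
    rw [mem_ann_iff, mul_comm x a, mem_ann_iff.mp hax, zero_mul]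
  exact mem_ann_iff.mp ((hy.mem_or_mem hxa).resolve_right hay)

theorem stmt1_general (R : Type*) [CommRing R] (x y : R)
    (hx : (ann R x).IsPrime) (hy : (ann R y).IsPrime)
    (hne : ann R x ≠ ann R y) : x * y = 0 := by
  by_cases hle : ann R x ≤ ann R y
  · rw [mul_comm]
    exact mul_eq_zero_of_not_le_ann hx fun hyx => hne (le_antisymm hle hyx)
  · exact mul_eq_zero_of_not_le_ann hy hle

theorem stmt1 (R : Type*) [CommRing R] [IsNoetherianRing R] (x y : R)
    (hx : (ann R x).IsPrime) (hy : (ann R y).IsPrime)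
    (hne : ann R x ≠ ann R y) : x * y = 0 :=
  stmt1_general R x y hx hy hne
end
end

section
/- The graph Γ_E(R) is connected and has diameter at most 3. -/
open scoped Classical

noncomputable section

/-!
For nonzero zero divisors `x` and `y` choose nonzero `a`, `b` with `x * a = 0` and `y * b = 0`.
If `a * b ≠ 0`, then `a * b` is a nonzero zero divisor killed by both `x` and `y`, giving
`x — ab — y`; otherwise `x — a — b — y` is a walk. In either walk consecutive elements multiply
to zero, so their classes are equal or adjacent, and the distance is at most `3`.
-/

namespace GammaE

variable {R : Type*} [CommRing R]

theorem edist_cls_le_one_of_mul_eq_zero {a b : ZD R} (hab : a.1 * b.1 = 0) :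
    (gammaE R).edist (cls R a) (cls R b) ≤ 1 := by
  rw [SimpleGraph.edist_le_one_iff_adj_or_eq]
  by_cases h : cls R a = cls R b
  · exact Or.inr h
  · exact Or.inl ⟨h, a, b, rfl, rfl, hab⟩

theorem edist_cls_le_three (x y : ZD R) : (gammaE R).edist (cls R x) (cls R y) ≤ 3 := by
  obtain ⟨hx, a, ha, hxa⟩ := x.2
  obtain ⟨hy, b, hb, hyb⟩ := y.2
  let A : ZD R := ⟨a, ha, x.1, hx, by rw [mul_comm, hxa]⟩
  let B : ZD R := ⟨b, hb, y.1, hy, by rw [mul_comm, hyb]⟩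
  have hxA := edist_cls_le_one_of_mul_eq_zero (a := x) (b := A) hxa
  have hBy := edist_cls_le_one_of_mul_eq_zero (a := B) (b := y) (by rw [mul_comm, hyb])
  by_cases hab : a * b = 0
  · have hAB := edist_cls_le_one_of_mul_eq_zero (a := A) (b := B) hab
    calc (gammaE R).edist (cls R x) (cls R y)
        ≤ (gammaE R).edist (cls R x) (cls R A) + (gammaE R).edist (cls R A) (cls R B)
          + (gammaE R).edist (cls R B) (cls R y) :=
          (SimpleGraph.edist_triangle ..).trans (add_le_add_left SimpleGraph.edist_triangle _)
      _ ≤ 1 + 1 + 1 := by gcongr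
      _ = 3 := rfl
  · let C : ZD R := ⟨a * b, hab, x.1, hx, by rw [mul_comm, ← mul_assoc, hxa, zero_mul]⟩
    have hxC := edist_cls_le_one_of_mul_eq_zero (a := x) (b := C)
      (show x.1 * (a * b) = 0 by rw [← mul_assoc, hxa, zero_mul])
    have hCy := edist_cls_le_one_of_mul_eq_zero (a := C) (b := y)
      (show a * b * y.1 = 0 by rw [mul_assoc, mul_comm b, hyb, mul_zero])
    calc (gammaE R).edist (cls R x) (cls R y)
        ≤ (gammaE R).edist (cls R x) (cls R C) + (gammaE R).edist (cls R C) (cls R y) :=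
          SimpleGraph.edist_triangle
      _ ≤ 1 + 1 := by gcongr
      _ ≤ 3 := by norm_num

theorem edist_le_three (u v : GammaEV R) : (gammaE R).edist u v ≤ 3 :=
  Quotient.inductionOn₂ u v edist_cls_le_three

end GammaE

theorem stmt3_general (R : Type*) [CommRing R] [Nonempty (ZD R)] :
    (gammaE R).Connected ∧ ∀ u v : GammaEV R, (gammaE R).dist u v ≤ 3 := by
  have : Nonempty (GammaEV R) := Nonempty.map (cls R) ‹_›
  refine ⟨⟨fun u v => ?_⟩, fun u v => ENat.toNat_le_of_le_natCast (GammaE.edist_le_three u v)⟩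
  exact SimpleGraph.reachable_of_edist_ne_top <|
    ne_top_of_le_ne_top (by decide) (GammaE.edist_le_three u v)

theorem stmt3 (R : Type*) [CommRing R] [IsNoetherianRing R] [Nonempty (ZD R)] :
    (gammaE R).Connected ∧ ∀ u v : GammaEV R, (gammaE R).dist u v ≤ 3 :=
  stmt3_general R
end
end

section
/- If Γ_E(R) has at least three vertices, then Γ_E(R) is not a complete graph. -/
/-!
Adjacency of two classes does not depend on the chosen representatives, so if `Γ_E(R)` is
complete then `xy = 0` whenever `[x] ≠ [y]`. A nonzero `t` with `t² = 0` then annihilates every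
zero divisor, so `ann t` is the set of all zero divisors, and two such elements lie in the same
class. On the other hand, for three distinct classes `[x], [y], [z]` the sum `x + y` is a nonzero
zero divisor (it kills `z`) whose class differs from `[x]` or from `[y]`, which forces `x² = 0` or
`y² = 0`. Applied to the pairs of three distinct classes this gives two distinct classes of
square-zero elements, a contradiction.
-/

open scoped Classical

noncomputable section

section

variable {R : Type*} [CommRing R]

lemma mem_ann {a x : R} : a ∈ ann R x ↔ a * x = 0 := by
  simp [ann, Ideal.mem_torsionOf_iff, smul_eq_mul]

lemma ann_neg (x : R) : ann R (-x) = ann R x := by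
  ext a; simp [mem_ann]

lemma cls_eq_iff {a b : ZD R} : cls R a = cls R b ↔ ann R a.1 = ann R b.1 :=
  Quotient.eq

lemma cls_surjective : Function.Surjective (cls R) :=
  Quotient.mk_surjective

lemma mul_eq_zero_of_cls_eq {a a' b b' : ZD R} (ha : cls R a = cls R a')
    (hb : cls R b = cls R b') (h : a'.1 * b'.1 = 0) : a.1 * b.1 = 0 := by
  have hab' : a.1 * b'.1 = 0 := by
    rw [mul_comm, ← mem_ann, cls_eq_iff.1 ha, mem_ann, mul_comm, h]
  rw [← mem_ann, cls_eq_iff.1 hb, mem_ann, hab']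

lemma gammaE_adj_cls_iff {a b : ZD R} :
    (gammaE R).Adj (cls R a) (cls R b) ↔ cls R a ≠ cls R b ∧ a.1 * b.1 = 0 := by
  refine ⟨fun ⟨hne, a', b', ha', hb', h⟩ => ⟨hne, ?_⟩, fun ⟨hne, h⟩ => ⟨hne, a, b, rfl, rfl, h⟩⟩
  exact mul_eq_zero_of_cls_eq ha'.symm hb'.symm h

lemma mul_eq_zero_of_cls_ne (hG : ∀ u v : GammaEV R, u ≠ v → (gammaE R).Adj u v)
    {a b : ZD R} (h : cls R a ≠ cls R b) : a.1 * b.1 = 0 :=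
  (gammaE_adj_cls_iff.1 (hG _ _ h)).2

lemma mul_eq_zero_of_sq_eq_zero (hG : ∀ u v : GammaEV R, u ≠ v → (gammaE R).Adj u v)
    (a : ZD R) {t : ZD R} (ht : t.1 * t.1 = 0) : a.1 * t.1 = 0 := by
  by_cases hat : cls R a = cls R t
  · exact mul_eq_zero_of_cls_eq hat rfl ht
  · exact mul_eq_zero_of_cls_ne hG hat

lemma cls_eq_of_sq_eq_zero (hG : ∀ u v : GammaEV R, u ≠ v → (gammaE R).Adj u v)
    {u v : ZD R} (hu : u.1 * u.1 = 0) (hv : v.1 * v.1 = 0) : cls R u = cls R v := by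
  rw [cls_eq_iff]
  ext a
  simp only [mem_ann]
  rcases eq_or_ne a 0 with rfl | ha
  · simp
  constructor
  · exact fun hau => mul_eq_zero_of_sq_eq_zero hG ⟨a, ha, u.1, u.2.1, hau⟩ hv
  · exact fun hav => mul_eq_zero_of_sq_eq_zero hG ⟨a, ha, v.1, v.2.1, hav⟩ hu

lemma sq_eq_zero_or_sq_eq_zero (hG : ∀ u v : GammaEV R, u ≠ v → (gammaE R).Adj u v)
    {x y z : ZD R} (hxy : cls R x ≠ cls R y) (hxz : cls R x ≠ cls R z)
    (hyz : cls R y ≠ cls R z) : x.1 * x.1 = 0 ∨ y.1 * y.1 = 0 := by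
  have hxy0 := mul_eq_zero_of_cls_ne hG hxy
  have hsum_ne : x.1 + y.1 ≠ 0 := by
    intro h0
    apply hxy
    rw [cls_eq_iff, eq_neg_of_add_eq_zero_left h0, ann_neg]
  have hsum_z : (x.1 + y.1) * z.1 = 0 := by
    rw [add_mul, mul_eq_zero_of_cls_ne hG hxz, mul_eq_zero_of_cls_ne hG hyz, add_zero]
  let s : ZD R := ⟨x.1 + y.1, hsum_ne, z.1, z.2.1, hsum_z⟩
  by_cases hsx : cls R s = cls R x
  · have hsy : (x.1 + y.1) * y.1 = 0 := mul_eq_zero_of_cls_ne hG (hsx ▸ hxy)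
    exact Or.inr (by linear_combination hsy - hxy0)
  · have hsx : (x.1 + y.1) * x.1 = 0 := mul_eq_zero_of_cls_ne hG hsx
    exact Or.inl (by linear_combination hsx - hxy0)

end

theorem stmt4_general (R : Type*) [CommRing R]
    (hcard : 3 ≤ (Set.univ : Set (GammaEV R)).encard) :
    ¬ ∀ u v : GammaEV R, u ≠ v → (gammaE R).Adj u v := by
  intro hG
  obtain ⟨t, -, ht⟩ := Set.exists_subset_encard_eq hcard
  obtain ⟨a, b, c, hab, hac, hbc, -⟩ := Set.encard_eq_three.1 ht
  obtain ⟨x, rfl⟩ := cls_surjective a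
  obtain ⟨y, rfl⟩ := cls_surjective b
  obtain ⟨z, rfl⟩ := cls_surjective c
  rcases sq_eq_zero_or_sq_eq_zero hG hab hac hbc with hx | hy
  · rcases sq_eq_zero_or_sq_eq_zero hG hbc hab.symm hac.symm with hy | hz
    · exact hab (cls_eq_of_sq_eq_zero hG hx hy)
    · exact hac (cls_eq_of_sq_eq_zero hG hx hz)
  · rcases sq_eq_zero_or_sq_eq_zero hG hac hab hbc.symm with hx | hz
    · exact hab (cls_eq_of_sq_eq_zero hG hx hy)
    · exact hbc (cls_eq_of_sq_eq_zero hG hy hz)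

theorem stmt4 (R : Type*) [CommRing R] [IsNoetherianRing R]
    (hcard : 3 ≤ (Set.univ : Set (GammaEV R)).encard) :
    ¬ ∀ u v : GammaEV R, u ≠ v → (gammaE R).Adj u v :=
  stmt4_general R hcard
end
end
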